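/- (Quantitative vector field bound) Assume V ∈ C²_b(ℝ^{dn}) and ω^{3/2−σ}χ ∈ L² with σ ∈ [1/2,1]. Then there exists C > 0 such that for all t ∈ ℝ and all u = (p,q,α) ∈ X^σ, ‖v(t,u)‖_{X^σ} ≤ C(‖u‖²_{X⁰} + 1), where v(t,u) = Φ^f_{−t}(𝒩(Φ^f_t(u))). In the semi-relativistic case one has the sharper bound ‖v(t,u)‖_{X^σ} ≤ C(‖α‖²_{L²} + 1). -/

import Mathlib

open MeasureTheory

noncomputable section

/-- The phase space X = ℝ^{dn} × ℝ^{dn} × {fields}: momenta (p_1,…,p_n), positions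
(flattened into ℝ^{n×d}) and the field α : ℝ^d → ℂ. -/
abbrev PhaseSpace (d n : ℕ) :=
  (Fin n → EuclideanSpace ℝ (Fin d)) × EuclideanSpace ℝ (Fin n × Fin d) ×
    (EuclideanSpace ℝ (Fin d) → ℂ)

/-- The dispersion relation ω(k) = √(|k|² + m²). -/
def omega (d : ℕ) (m : ℝ) (k : EuclideanSpace ℝ (Fin d)) : ℝ :=
  Real.sqrt (‖k‖ ^ 2 + m ^ 2)

/-- The j-th position block q_j ∈ ℝ^d of q ∈ ℝ^{n×d}. -/
def qblock (d n : ℕ) (q : EuclideanSpace ℝ (Fin n × Fin d)) (j : Fin n) :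
    EuclideanSpace ℝ (Fin d) :=
  WithLp.toLp 2 (fun i => q (j, i))

/-- The phase 2π k·x. -/
def phase (d : ℕ) (k x : EuclideanSpace ℝ (Fin d)) : ℝ :=
  2 * Real.pi * ∑ i, k i * x i

/-- The i-th component of
∇_{q_j} I_j(q,α) = ∫ 2πi k (χ(k)/√ω(k)) [α(k) e^{2πi k·q_j} − conj(α(k)) e^{−2πi k·q_j}] dk. -/
def gradI (d : ℕ) (m : ℝ) (χ : EuclideanSpace ℝ (Fin d) → ℝ)
    (qj : EuclideanSpace ℝ (Fin d)) (α : EuclideanSpace ℝ (Fin d) → ℂ) (i : Fin d) : ℂ :=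
  ∫ k : EuclideanSpace ℝ (Fin d),
    2 * (Real.pi : ℂ) * Complex.I * ((k i : ℝ) : ℂ) *
      ((χ k / Real.sqrt (omega d m k) : ℝ) : ℂ) *
      (α k * Complex.exp (((phase d k qj : ℝ) : ℂ) * Complex.I) -
        (starRingEnd ℂ) (α k) * Complex.exp (-(((phase d k qj : ℝ) : ℂ) * Complex.I)))

/-- The nonlinearity 𝒩 of the particle-field equation:
(𝒩(u))_{p_j} = −∇_{q_j}V(q) − ∇_{q_j}I_j(q,α), (𝒩(u))_{q_j} = ∇f_j(p_j),
(𝒩(u))_α(k) = −i Σ_j (χ(k)/√ω(k)) e^{−2πik·q_j}. -/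
def NL (d n : ℕ) (m : ℝ) (χ : EuclideanSpace ℝ (Fin d) → ℝ)
    (V : EuclideanSpace ℝ (Fin n × Fin d) → ℝ)
    (f : Fin n → EuclideanSpace ℝ (Fin d) → ℝ)
    (u : PhaseSpace d n) : PhaseSpace d n :=
  (fun j => (WithLp.toLp 2 (fun i => -(gradient V u.2.1 (j, i)) -
      (gradI d m χ (qblock d n u.2.1 j) u.2.2 i).re) : EuclideanSpace ℝ (Fin d)),
    (WithLp.toLp 2 (fun ji : Fin n × Fin d => gradient (f ji.1) (u.1 ji.1) ji.2) : EuclideanSpace ℝ (Fin n × Fin d)),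
    fun k => -Complex.I * ∑ j : Fin n, ((χ k / Real.sqrt (omega d m k) : ℝ) : ℂ) *
      Complex.exp (-(((phase d k (qblock d n u.2.1 j) : ℝ) : ℂ) * Complex.I)))

/-- The X^σ norm: ‖(p,q,α)‖² = Σ|p_j|² + Σ|q_j|² + ‖ω^σ α‖²_{L²}. -/
def normX (d n : ℕ) (σ m : ℝ) (u : PhaseSpace d n) : ℝ :=
  Real.sqrt ((∑ j, ‖u.1 j‖ ^ 2) + ‖u.2.1‖ ^ 2 +
    ((eLpNorm (fun k => ((omega d m k ^ σ : ℝ) : ℂ) * u.2.2 k) 2 volume).toReal) ^ 2)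

/-- The free field flow Φ^f_t(p,q,α) = (p, q, e^{−itω}α). -/
def freeFlow (d n : ℕ) (m : ℝ) (t : ℝ) (u : PhaseSpace d n) : PhaseSpace d n :=
  (u.1, u.2.1, fun k => Complex.exp (-(Complex.I * (t : ℂ) * ((omega d m k : ℝ) : ℂ))) * u.2.2 k)

/-- The non-autonomous vector field v(t,u) = Φ^f_{−t} ∘ 𝒩 ∘ Φ^f_t(u). -/
def vfield (d n : ℕ) (m : ℝ) (χ : EuclideanSpace ℝ (Fin d) → ℝ)
    (V : EuclideanSpace ℝ (Fin n × Fin d) → ℝ)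
    (f : Fin n → EuclideanSpace ℝ (Fin d) → ℝ)
    (t : ℝ) (u : PhaseSpace d n) : PhaseSpace d n :=
  freeFlow d n m (-t) (NL d n m χ V f (freeFlow d n m t u))

end

/-! Since `|e^{-itω}| = 1`, the free flow `Φ^f_t` is an isometry of every `X^σ` and preserves
`‖α‖_{L²}`, so it suffices to bound `𝒩`. Its momentum part is at most `sup |∇V|` plus `|∇_q I|`,
and `|k| / √ω ≤ √ω ≤ m^{σ-1} ω^{3/2-σ}` together with Cauchy–Schwarz gives
`|∇_q I| ≲ ‖ω^{3/2-σ} χ‖_{L²} ‖α‖_{L²}`. Its field part satisfies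
`‖ω^σ 𝒩_α‖_{L²} ≤ n m^{2σ-2} ‖ω^{3/2-σ} χ‖_{L²}` because `ω^{σ-1/2} ≤ m^{2σ-2} ω^{3/2-σ}`.
Its position part `∇f_j(p_j)` has norm at most `1` in the semi-relativistic case and `|p_j| / M_j`
in the non-relativistic one. Every term is thus affine in `‖u‖_{X⁰}` (in `‖α‖_{L²}` alone in the
semi-relativistic case), and an affine function of `x ≥ 0` is `O(x² + 1)`. -/

lemma norm_integral_le_mul_eLpNorm_two_mul {X E G H : Type*} [MeasurableSpace X] {μ : Measure X}
    [NormedAddCommGroup E] [NormedSpace ℝ E] [NormedAddCommGroup G] [NormedAddCommGroup H]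
    {F : X → E} {g : X → G} {h : X → H} {c : ℝ} (hc : 0 ≤ c)
    (hg : MemLp g 2 μ) (hh : MemLp h 2 μ) (hF : ∀ x, ‖F x‖ ≤ c * (‖g x‖ * ‖h x‖)) :
    ‖∫ x, F x ∂μ‖ ≤ c * ((eLpNorm g 2 μ).toReal * (eLpNorm h 2 μ).toReal) := by
  have hF1 : eLpNorm F 1 μ ≤ ENNReal.ofReal c * eLpNorm (fun x => ‖g x‖ * ‖h x‖) 1 μ :=
    eLpNorm_le_mul_eLpNorm_of_ae_le_mul (.of_forall fun x => by simpa using hF x) 1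
  have hHolder : eLpNorm (fun x => ‖g x‖ * ‖h x‖) 1 μ ≤ 1 * eLpNorm g 2 μ * eLpNorm h 2 μ :=
    eLpNorm_le_eLpNorm_mul_eLpNorm'_of_norm hg.1 hh.1 (fun a b => ‖a‖ * ‖b‖) 1
      (.of_forall fun x => by simp)
  have hfin : ENNReal.ofReal c * (1 * eLpNorm g 2 μ * eLpNorm h 2 μ) ≠ ⊤ :=
    ENNReal.mul_ne_top ENNReal.ofReal_ne_top
      (ENNReal.mul_ne_top (by simpa using hg.2.ne) hh.2.ne)
  calc ‖∫ x, F x ∂μ‖ ≤ (eLpNorm F 1 μ).toReal := by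
        simpa [eLpNorm_one_eq_lintegral_enorm, ofReal_norm] using
          norm_integral_le_lintegral_norm F
    _ ≤ (ENNReal.ofReal c * (1 * eLpNorm g 2 μ * eLpNorm h 2 μ)).toReal :=
        ENNReal.toReal_mono hfin (hF1.trans (by gcongr))
    _ = c * ((eLpNorm g 2 μ).toReal * (eLpNorm h 2 μ).toReal) := by
        simp [ENNReal.toReal_mul, hc]

lemma sqrt_sum_sq_le_mul_sqrt_sum_sq {ι : Type*} [Fintype ι] {a b : ι → ℝ} {B : ℝ} (hB : 0 ≤ B)
    (h : ∀ i, |a i| ≤ B * |b i|) :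
    Real.sqrt (∑ i, a i ^ 2) ≤ B * Real.sqrt (∑ i, b i ^ 2) := by
  rw [← Real.sqrt_sq hB, ← Real.sqrt_mul (sq_nonneg B), Finset.mul_sum]
  refine Real.sqrt_le_sqrt (Finset.sum_le_sum fun i _ => ?_)
  rw [← mul_pow, ← sq_abs (a i), ← sq_abs (B * b i), abs_mul, abs_of_nonneg hB]
  exact pow_le_pow_left₀ (abs_nonneg _) (h i) 2

lemma sqrt_sum_sq_le_sqrt_card_mul {ι : Type*} [Fintype ι] {a : ι → ℝ} {c : ℝ} (hc : 0 ≤ c)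
    (h : ∀ i, |a i| ≤ c) : Real.sqrt (∑ i, a i ^ 2) ≤ Real.sqrt (Fintype.card ι) * c := by
  have := sqrt_sum_sq_le_mul_sqrt_sum_sq (b := fun _ => 1) hc (by simpa using h)
  simpa [mul_comm] using this

lemma EuclideanSpace.norm_le_sqrt_card_mul {ι : Type*} [Fintype ι] {x : EuclideanSpace ℝ ι} {c : ℝ}
    (hc : 0 ≤ c) (h : ∀ i, |x i| ≤ c) : ‖x‖ ≤ Real.sqrt (Fintype.card ι) * c := by
  rw [EuclideanSpace.norm_eq]
  simpa using sqrt_sum_sq_le_sqrt_card_mul hc h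

lemma one_add_le_two_mul_sq_add_one {x y : ℝ} (h : x ≤ y) : 1 + x ≤ 2 * (y ^ 2 + 1) := by
  nlinarith [sq_nonneg (y - 1)]

section Gradient

variable {F : Type*} [NormedAddCommGroup F] [InnerProductSpace ℝ F] [CompleteSpace F]

lemma norm_gradient_eq_norm_fderiv (f : F → ℝ) (x : F) : ‖gradient f x‖ = ‖fderiv ℝ f x‖ :=
  (InnerProductSpace.toDual ℝ F).symm.norm_map _

lemma norm_gradient_norm_sq_div (M : ℝ) (p : F) :
    ‖gradient (fun x : F => ‖x‖ ^ 2 / (2 * M)) p‖ = ‖p‖ / |M| := by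
  have h := ((hasStrictFDerivAt_norm_sq p).hasFDerivAt.const_mul (2 * M)⁻¹)
  simp only [← div_eq_inv_mul] at h
  rw [norm_gradient_eq_norm_fderiv, h.fderiv]
  simp only [mul_inv_rev, norm_smul, norm_mul, norm_inv, Real.norm_eq_abs, abs_two,
    RCLike.norm_nsmul ℝ, innerSL_apply_norm, nsmul_eq_mul, Nat.cast_ofNat]
  field_simp

lemma norm_gradient_sqrt_norm_sq_add_sq_le_one {M : ℝ} (hM : M ≠ 0) (p : F) :
    ‖gradient (fun x : F => Real.sqrt (‖x‖ ^ 2 + M ^ 2)) p‖ ≤ 1 := by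
  have hpos : 0 < ‖p‖ ^ 2 + M ^ 2 := by positivity
  have h := ((hasStrictFDerivAt_norm_sq p).hasFDerivAt.add_const (M ^ 2)).sqrt hpos.ne'
  rw [norm_gradient_eq_norm_fderiv, h.fderiv]
  have hs : ‖p‖ ≤ Real.sqrt (‖p‖ ^ 2 + M ^ 2) :=
    Real.le_sqrt_of_sq_le (le_add_of_nonneg_right (sq_nonneg M))
  have hs' : 0 < Real.sqrt (‖p‖ ^ 2 + M ^ 2) := Real.sqrt_pos.2 hpos
  simp only [one_div, mul_inv_rev, norm_smul, norm_mul, norm_inv, Real.norm_eq_abs,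
    RCLike.norm_nsmul ℝ, innerSL_apply_norm, nsmul_eq_mul, Nat.cast_ofNat]
  field_simp
  simpa [abs_of_pos hs'] using hs

end Gradient

section Dispersion

variable {d : ℕ} {m : ℝ}

lemma omega_pos (hm : 0 < m) (k : EuclideanSpace ℝ (Fin d)) : 0 < omega d m k :=
  Real.sqrt_pos.2 (by positivity)

lemma le_omega (k : EuclideanSpace ℝ (Fin d)) : m ≤ omega d m k :=
  Real.le_sqrt_of_sq_le (le_add_of_nonneg_left (sq_nonneg _))

lemma norm_le_omega (k : EuclideanSpace ℝ (Fin d)) : ‖k‖ ≤ omega d m k :=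
  Real.le_sqrt_of_sq_le (le_add_of_nonneg_right (sq_nonneg _))

@[fun_prop]
lemma continuous_omega : Continuous (omega d m) := by
  unfold omega; fun_prop

lemma omega_rpow_le (hm : 0 < m) (k : EuclideanSpace ℝ (Fin d)) {s t : ℝ} (hst : s ≤ t) :
    omega d m k ^ s ≤ m ^ (s - t) * omega d m k ^ t := by
  have hω := omega_pos hm k
  calc omega d m k ^ s = omega d m k ^ (s - t) * omega d m k ^ t := by
        rw [← Real.rpow_add hω, sub_add_cancel]
    _ ≤ m ^ (s - t) * omega d m k ^ t := by
        gcongr ?_ * _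
        exact Real.rpow_le_rpow_of_nonpos hm (le_omega k) (sub_nonpos.2 hst)

lemma sqrt_omega_le (hm : 0 < m) {σ : ℝ} (hσ : σ ≤ 1) (k : EuclideanSpace ℝ (Fin d)) :
    Real.sqrt (omega d m k) ≤ m ^ (σ - 1) * omega d m k ^ ((3 : ℝ) / 2 - σ) := by
  rw [Real.sqrt_eq_rpow]
  convert omega_rpow_le hm k (show (1 : ℝ) / 2 ≤ 3 / 2 - σ by linarith) using 3
  ring

lemma omega_rpow_div_sqrt_omega_le (hm : 0 < m) {σ : ℝ} (hσ : σ ≤ 1)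
    (k : EuclideanSpace ℝ (Fin d)) :
    omega d m k ^ σ / Real.sqrt (omega d m k) ≤
      m ^ (2 * σ - 2) * omega d m k ^ ((3 : ℝ) / 2 - σ) := by
  rw [Real.sqrt_eq_rpow, ← Real.rpow_sub (omega_pos hm k)]
  convert omega_rpow_le hm k (show σ - 1 / 2 ≤ 3 / 2 - σ by linarith) using 3
  ring

lemma abs_apply_div_sqrt_omega_le (hm : 0 < m) (k : EuclideanSpace ℝ (Fin d)) (i : Fin d) :
    |k i| / Real.sqrt (omega d m k) ≤ Real.sqrt (omega d m k) := by
  rw [div_le_iff₀ (Real.sqrt_pos.2 (omega_pos hm k)), Real.mul_self_sqrt (omega_pos hm k).le]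
  exact ((PiLp.norm_apply_le k i).trans (norm_le_omega k))

lemma memLp_of_memLp_omega_rpow_mul (hm : 0 < m) {σ : ℝ} (hσ : 0 ≤ σ)
    {α : EuclideanSpace ℝ (Fin d) → ℂ}
    (hα : MemLp (fun k => ((omega d m k ^ σ : ℝ) : ℂ) * α k) 2 volume) : MemLp α 2 volume := by
  have hα_eq :
      α = fun k => ((omega d m k ^ (-σ) : ℝ) : ℂ) * (((omega d m k ^ σ : ℝ) : ℂ) * α k) := by
    funext k
    rw [← mul_assoc, ← Complex.ofReal_mul, ← Real.rpow_add (omega_pos hm k), neg_add_cancel,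
      Real.rpow_zero, Complex.ofReal_one, one_mul]
  refine hα.of_le_mul (c := m ^ (-σ)) ?_ (.of_forall fun k => ?_)
  · rw [hα_eq]
    have hcont : Continuous fun k => omega d m k ^ (-σ) :=
      continuous_omega.rpow_const fun k => .inl (omega_pos hm k).ne'
    exact (Complex.continuous_ofReal.comp hcont).aestronglyMeasurable.mul hα.1
  · conv_lhs => rw [hα_eq]
    rw [norm_mul, Complex.norm_real, Real.norm_of_nonneg (Real.rpow_nonneg (omega_pos hm k).le _)]
    gcongr ?_ * _
    exact Real.rpow_le_rpow_of_nonpos hm (le_omega k) (neg_nonpos.2 hσ)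

end Dispersion

section FreeFlow

variable {d n : ℕ} {m : ℝ}

lemma norm_freeFlow_field (t : ℝ) (u : PhaseSpace d n) (k : EuclideanSpace ℝ (Fin d)) :
    ‖(freeFlow d n m t u).2.2 k‖ = ‖u.2.2 k‖ := by
  simp [freeFlow, Complex.norm_exp]

lemma eLpNorm_freeFlow_field (t : ℝ) (u : PhaseSpace d n) (p : ENNReal) :
    eLpNorm (freeFlow d n m t u).2.2 p volume = eLpNorm u.2.2 p volume :=
  eLpNorm_congr_norm_ae (.of_forall (norm_freeFlow_field t u))

lemma memLp_freeFlow_field {t : ℝ} {u : PhaseSpace d n} {p : ENNReal}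
    (hu : MemLp u.2.2 p volume) : MemLp (freeFlow d n m t u).2.2 p volume :=
  hu.of_le ((Continuous.aestronglyMeasurable (by fun_prop)).mul hu.1)
    (.of_forall fun k => (norm_freeFlow_field t u k).le)

lemma normX_freeFlow (σ t : ℝ) (u : PhaseSpace d n) :
    normX d n σ m (freeFlow d n m t u) = normX d n σ m u := by
  have : ∀ k, ‖((omega d m k ^ σ : ℝ) : ℂ) * (freeFlow d n m t u).2.2 k‖ =
      ‖((omega d m k ^ σ : ℝ) : ℂ) * u.2.2 k‖ := fun k => by
    rw [norm_mul, norm_mul, norm_freeFlow_field]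
  rw [normX, normX, eLpNorm_congr_norm_ae (.of_forall this)]
  rfl

end FreeFlow

section NormX

variable {d n : ℕ} {m σ : ℝ}

lemma normX_le_add (u : PhaseSpace d n) :
    normX d n σ m u ≤ Real.sqrt (∑ j, ‖u.1 j‖ ^ 2) + ‖u.2.1‖ +
      (eLpNorm (fun k => ((omega d m k ^ σ : ℝ) : ℂ) * u.2.2 k) 2 volume).toReal := by
  set e := (eLpNorm (fun k => ((omega d m k ^ σ : ℝ) : ℂ) * u.2.2 k) 2 volume).toReal
  have hP := Real.sq_sqrt (Finset.sum_nonneg fun j (_ : j ∈ Finset.univ) => sq_nonneg ‖u.1 j‖)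
  refine Real.sqrt_le_iff.2 ⟨by positivity, ?_⟩
  calc _ = Real.sqrt (∑ j, ‖u.1 j‖ ^ 2) ^ 2 + ‖u.2.1‖ ^ 2 + e ^ 2 := by rw [hP]
    _ ≤ _ := by nlinarith [Real.sqrt_nonneg (∑ j, ‖u.1 j‖ ^ 2), norm_nonneg u.2.1,
      show 0 ≤ e from ENNReal.toReal_nonneg]

lemma sqrt_sum_norm_sq_le_normX (u : PhaseSpace d n) :
    Real.sqrt (∑ j, ‖u.1 j‖ ^ 2) ≤ normX d n σ m u :=
  Real.sqrt_le_sqrt (by nlinarith [norm_nonneg u.2.1,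
    (eLpNorm (fun k => ((omega d m k ^ σ : ℝ) : ℂ) * u.2.2 k) 2 volume).toReal_nonneg])

lemma eLpNorm_field_le_normX_zero (u : PhaseSpace d n) :
    (eLpNorm u.2.2 2 volume).toReal ≤ normX d n 0 m u := by
  refine Real.le_sqrt_of_sq_le ?_
  simp only [Real.rpow_zero, Complex.ofReal_one, one_mul]
  nlinarith [norm_nonneg u.2.1, Finset.sum_nonneg fun j (_ : j ∈ Finset.univ) => sq_nonneg ‖u.1 j‖]

end NormX

section Nonlinearity

variable {d n : ℕ} {m σ : ℝ}

lemma norm_gradI_le (hm : 0 < m) (hσ : σ ≤ 1) {χ : EuclideanSpace ℝ (Fin d) → ℝ}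
    (hχ : MemLp (fun k => omega d m k ^ ((3 : ℝ) / 2 - σ) * χ k) 2 volume)
    {α : EuclideanSpace ℝ (Fin d) → ℂ} (hα : MemLp α 2 volume)
    (qj : EuclideanSpace ℝ (Fin d)) (i : Fin d) :
    ‖gradI d m χ qj α i‖ ≤ 4 * Real.pi * m ^ (σ - 1) *
      ((eLpNorm (fun k => omega d m k ^ ((3 : ℝ) / 2 - σ) * χ k) 2 volume).toReal *
        (eLpNorm α 2 volume).toReal) := by
  refine norm_integral_le_mul_eLpNorm_two_mul (by positivity) hχ hα fun k => ?_
  have hω := omega_pos hm k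
  have hbracket : ‖α k * Complex.exp ((phase d k qj : ℂ) * Complex.I) -
      (starRingEnd ℂ) (α k) * Complex.exp (-((phase d k qj : ℂ) * Complex.I))‖ ≤ 2 * ‖α k‖ := by
    refine (norm_sub_le _ _).trans ?_
    rw [norm_mul, norm_mul, ← neg_mul, ← Complex.ofReal_neg, Complex.norm_exp_ofReal_mul_I,
      Complex.norm_exp_ofReal_mul_I, RCLike.norm_conj]
    linarith
  have hweight : |k i| / Real.sqrt (omega d m k) ≤ m ^ (σ - 1) * omega d m k ^ ((3 : ℝ) / 2 - σ) :=
    (abs_apply_div_sqrt_omega_le hm k i).trans (sqrt_omega_le hm hσ k)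
  simp only [norm_mul, Complex.norm_real, Complex.norm_I, Complex.norm_ofNat, Real.norm_eq_abs,
    abs_div, abs_of_pos (Real.sqrt_pos.2 hω), abs_of_pos Real.pi_pos,
    abs_of_pos (Real.rpow_pos_of_pos hω _)]
  calc 2 * Real.pi * 1 * |k i| * (|χ k| / Real.sqrt (omega d m k)) * ‖_‖
      = 2 * Real.pi * (|k i| / Real.sqrt (omega d m k)) * |χ k| * ‖_‖ := by ring
    _ ≤ 2 * Real.pi * (m ^ (σ - 1) * omega d m k ^ ((3 : ℝ) / 2 - σ)) * |χ k| * (2 * ‖α k‖) := by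
        gcongr
    _ = _ := by ring

lemma abs_NL_fst_apply_le (hm : 0 < m) (hσ : σ ≤ 1) {χ : EuclideanSpace ℝ (Fin d) → ℝ}
    (hχ : MemLp (fun k => omega d m k ^ ((3 : ℝ) / 2 - σ) * χ k) 2 volume)
    {V : EuclideanSpace ℝ (Fin n × Fin d) → ℝ} {CV : ℝ} (hV : ∀ q, ‖gradient V q‖ ≤ CV)
    (f : Fin n → EuclideanSpace ℝ (Fin d) → ℝ) {u : PhaseSpace d n} (hα : MemLp u.2.2 2 volume)
    (j : Fin n) (i : Fin d) :
    |(NL d n m χ V f u).1 j i| ≤ CV + 4 * Real.pi * m ^ (σ - 1) *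
      ((eLpNorm (fun k => omega d m k ^ ((3 : ℝ) / 2 - σ) * χ k) 2 volume).toReal *
        (eLpNorm u.2.2 2 volume).toReal) := by
  have hVji : |gradient V u.2.1 (j, i)| ≤ CV := (PiLp.norm_apply_le _ (j, i)).trans (hV _)
  have hIji := (Complex.abs_re_le_norm _).trans
    (norm_gradI_le hm hσ hχ hα (qblock d n u.2.1 j) i)
  calc |-(gradient V u.2.1 (j, i)) - (gradI d m χ (qblock d n u.2.1 j) u.2.2 i).re|
      ≤ |gradient V u.2.1 (j, i)| + |(gradI d m χ (qblock d n u.2.1 j) u.2.2 i).re| := by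
        simpa using abs_sub (-(gradient V u.2.1 (j, i)))
          (gradI d m χ (qblock d n u.2.1 j) u.2.2 i).re
    _ ≤ _ := add_le_add hVji hIji

lemma norm_NL_snd_fst (χ : EuclideanSpace ℝ (Fin d) → ℝ)
    (V : EuclideanSpace ℝ (Fin n × Fin d) → ℝ) (f : Fin n → EuclideanSpace ℝ (Fin d) → ℝ)
    (u : PhaseSpace d n) :
    ‖(NL d n m χ V f u).2.1‖ = Real.sqrt (∑ j, ‖gradient (f j) (u.1 j)‖ ^ 2) := by
  simp only [NL, EuclideanSpace.norm_eq, Fintype.sum_prod_type]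
  congr 1
  refine Finset.sum_congr rfl fun j _ => ?_
  rw [Real.sq_sqrt (by positivity)]

lemma eLpNorm_NL_field_le (hm : 0 < m) (hσ : σ ≤ 1) {χ : EuclideanSpace ℝ (Fin d) → ℝ}
    (hχ : MemLp (fun k => omega d m k ^ ((3 : ℝ) / 2 - σ) * χ k) 2 volume)
    (V : EuclideanSpace ℝ (Fin n × Fin d) → ℝ) (f : Fin n → EuclideanSpace ℝ (Fin d) → ℝ)
    (u : PhaseSpace d n) :
    (eLpNorm (fun k => ((omega d m k ^ σ : ℝ) : ℂ) * (NL d n m χ V f u).2.2 k) 2 volume).toReal ≤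
      n * m ^ (2 * σ - 2) *
        (eLpNorm (fun k => omega d m k ^ ((3 : ℝ) / 2 - σ) * χ k) 2 volume).toReal := by
  have hpt : ∀ k, ‖((omega d m k ^ σ : ℝ) : ℂ) * (NL d n m χ V f u).2.2 k‖ ≤
      n * m ^ (2 * σ - 2) * ‖omega d m k ^ ((3 : ℝ) / 2 - σ) * χ k‖ := fun k => by
    have hω := omega_pos hm k
    have hsum : ‖∑ j : Fin n, ((χ k / Real.sqrt (omega d m k) : ℝ) : ℂ) *
        Complex.exp (-((phase d k (qblock d n u.2.1 j) : ℂ) * Complex.I))‖ ≤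
        n * (|χ k| / Real.sqrt (omega d m k)) := by
      refine (norm_sum_le _ _).trans_eq ?_
      simp [Complex.norm_exp, abs_of_pos (Real.sqrt_pos.2 hω)]
    simp only [NL, norm_mul, norm_neg, Complex.norm_I, one_mul, Complex.norm_real, Real.norm_eq_abs,
      abs_of_pos (Real.rpow_pos_of_pos hω _)]
    calc omega d m k ^ σ * ‖_‖ ≤ omega d m k ^ σ * (n * (|χ k| / Real.sqrt (omega d m k))) := by
          gcongr
      _ = n * (omega d m k ^ σ / Real.sqrt (omega d m k)) * |χ k| := by ring
      _ ≤ n * (m ^ (2 * σ - 2) * omega d m k ^ ((3 : ℝ) / 2 - σ)) * |χ k| := by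
          gcongr
          exact omega_rpow_div_sqrt_omega_le hm hσ k
      _ = _ := by ring
  have hfin : ENNReal.ofReal (n * m ^ (2 * σ - 2)) *
      eLpNorm (fun k => omega d m k ^ ((3 : ℝ) / 2 - σ) * χ k) 2 volume ≠ ⊤ :=
    ENNReal.mul_ne_top ENNReal.ofReal_ne_top hχ.2.ne
  calc _ ≤ (ENNReal.ofReal (n * m ^ (2 * σ - 2)) *
        eLpNorm (fun k => omega d m k ^ ((3 : ℝ) / 2 - σ) * χ k) 2 volume).toReal :=
        ENNReal.toReal_mono hfin (eLpNorm_le_mul_eLpNorm_of_ae_le_mul (.of_forall hpt) 2)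
    _ = _ := by rw [ENNReal.toReal_mul, ENNReal.toReal_ofReal (by positivity)]

end Nonlinearity

section Kinetic

variable {n : ℕ} {E : Type*} [NormedAddCommGroup E] [InnerProductSpace ℝ E] [CompleteSpace E]
  {M : Fin n → ℝ} {f : Fin n → E → ℝ}

lemma sqrt_sum_norm_gradient_sq_le_of_semirelativistic (hM : ∀ j, M j ≠ 0)
    (hf : ∀ j p, f j p = Real.sqrt (‖p‖ ^ 2 + M j ^ 2)) (p : Fin n → E) :
    Real.sqrt (∑ j, ‖gradient (f j) (p j)‖ ^ 2) ≤ Real.sqrt n := by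
  simpa using sqrt_sum_sq_le_sqrt_card_mul (a := fun j => ‖gradient (f j) (p j)‖) zero_le_one
    fun j => by
      rw [abs_norm, funext (hf j)]
      exact norm_gradient_sqrt_norm_sq_add_sq_le_one (hM j) (p j)

lemma sqrt_sum_norm_gradient_sq_le_of_nonrelativistic
    (hf : ∀ j p, f j p = ‖p‖ ^ 2 / (2 * M j)) (p : Fin n → E) :
    Real.sqrt (∑ j, ‖gradient (f j) (p j)‖ ^ 2) ≤
      (∑ j, |M j|⁻¹) * Real.sqrt (∑ j, ‖p j‖ ^ 2) := by
  refine sqrt_sum_sq_le_mul_sqrt_sum_sq (by positivity) fun j => ?_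
  rw [abs_norm, abs_norm, funext (hf j), norm_gradient_norm_sq_div, div_eq_inv_mul]
  gcongr
  exact Finset.single_le_sum (f := fun i => |M i|⁻¹) (fun i _ => by positivity) (Finset.mem_univ j)

lemma exists_sqrt_sum_norm_gradient_sq_le (hM : ∀ j, M j ≠ 0)
    (hf : (∀ j p, f j p = Real.sqrt (‖p‖ ^ 2 + M j ^ 2)) ∨ (∀ j p, f j p = ‖p‖ ^ 2 / (2 * M j))) :
    ∃ B ≥ 0, ∀ p : Fin n → E,
      Real.sqrt (∑ j, ‖gradient (f j) (p j)‖ ^ 2) ≤ B * (1 + Real.sqrt (∑ j, ‖p j‖ ^ 2)) := by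
  rcases hf with hf | hf
  · refine ⟨Real.sqrt n, by positivity, fun p => ?_⟩
    nlinarith [sqrt_sum_norm_gradient_sq_le_of_semirelativistic hM hf p,
      mul_nonneg (Real.sqrt_nonneg n) (Real.sqrt_nonneg (∑ j, ‖p j‖ ^ 2))]
  · refine ⟨∑ j, |M j|⁻¹, by positivity, fun p => ?_⟩
    nlinarith [sqrt_sum_norm_gradient_sq_le_of_nonrelativistic hf p,
      show 0 ≤ ∑ j, |M j|⁻¹ by positivity]

end Kinetic

section VectorField

variable {d n : ℕ} {m σ : ℝ}

lemma exists_normX_NL_le (hm : 0 < m) (hσ : σ ≤ 1) {χ : EuclideanSpace ℝ (Fin d) → ℝ}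
    (hχ : MemLp (fun k => omega d m k ^ ((3 : ℝ) / 2 - σ) * χ k) 2 volume)
    {V : EuclideanSpace ℝ (Fin n × Fin d) → ℝ} (hV : ∃ C, ∀ q, ‖gradient V q‖ ≤ C)
    (f : Fin n → EuclideanSpace ℝ (Fin d) → ℝ) :
    ∃ C > 0, ∀ u : PhaseSpace d n, MemLp u.2.2 2 volume →
      normX d n σ m (NL d n m χ V f u) ≤
        C * (1 + (eLpNorm u.2.2 2 volume).toReal) + ‖(NL d n m χ V f u).2.1‖ := by
  obtain ⟨CV, hV⟩ := hV
  have hCV : 0 ≤ CV := (norm_nonneg _).trans (hV 0)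
  set Cχ := (eLpNorm (fun k => omega d m k ^ ((3 : ℝ) / 2 - σ) * χ k) 2 volume).toReal
  have hCχ : 0 ≤ Cχ := ENNReal.toReal_nonneg
  set A := Real.sqrt n * Real.sqrt d
  set K := 4 * Real.pi * m ^ (σ - 1)
  set Cα := n * m ^ (2 * σ - 2) * Cχ
  refine ⟨A * (CV + K * Cχ) + Cα + 1, by positivity, fun u hα => ?_⟩
  set a := (eLpNorm u.2.2 2 volume).toReal
  have ha : 0 ≤ a := ENNReal.toReal_nonneg
  have hmomentum : Real.sqrt (∑ j, ‖(NL d n m χ V f u).1 j‖ ^ 2) ≤ A * (CV + K * (Cχ * a)) := by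
    have hc : 0 ≤ CV + K * (Cχ * a) := by positivity
    simpa [A, mul_assoc] using sqrt_sum_sq_le_sqrt_card_mul
      (a := fun j => ‖(NL d n m χ V f u).1 j‖) (by positivity) fun j => by
      rw [abs_norm]
      simpa using EuclideanSpace.norm_le_sqrt_card_mul hc
        (abs_NL_fst_apply_le hm hσ hχ hV f hα j)
  have hfield := eLpNorm_NL_field_le hm hσ hχ V f u
  have hACV : 0 ≤ A * CV := by positivity
  have hAK : 0 ≤ A * (K * Cχ) := by positivity
  have hCα : 0 ≤ Cα := by positivity
  calc normX d n σ m (NL d n m χ V f u)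
      ≤ A * (CV + K * (Cχ * a)) + ‖(NL d n m χ V f u).2.1‖ + Cα :=
        (normX_le_add _).trans (add_le_add_three hmomentum le_rfl hfield)
    _ ≤ _ := by nlinarith [mul_nonneg hACV ha, mul_nonneg hCα ha]

lemma exists_normX_vfield_le (hm : 0 < m) (hσ₀ : 0 ≤ σ) (hσ₁ : σ ≤ 1)
    {χ : EuclideanSpace ℝ (Fin d) → ℝ}
    (hχ : MemLp (fun k => omega d m k ^ ((3 : ℝ) / 2 - σ) * χ k) 2 volume)
    {V : EuclideanSpace ℝ (Fin n × Fin d) → ℝ} (hV : ∃ C, ∀ q, ‖gradient V q‖ ≤ C)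
    (f : Fin n → EuclideanSpace ℝ (Fin d) → ℝ) :
    ∃ C > 0, ∀ (t : ℝ) (u : PhaseSpace d n),
      MemLp (fun k => ((omega d m k ^ σ : ℝ) : ℂ) * u.2.2 k) 2 volume →
      normX d n σ m (vfield d n m χ V f t u) ≤
        C * (1 + (eLpNorm u.2.2 2 volume).toReal) +
          Real.sqrt (∑ j, ‖gradient (f j) (u.1 j)‖ ^ 2) := by
  obtain ⟨C, hC, hNL⟩ := exists_normX_NL_le hm hσ₁ hχ hV f
  refine ⟨C, hC, fun t u hu => ?_⟩
  have hα : MemLp (freeFlow d n m t u).2.2 2 volume :=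
    memLp_freeFlow_field (memLp_of_memLp_omega_rpow_mul hm hσ₀ hu)
  rw [vfield, normX_freeFlow, ← eLpNorm_freeFlow_field (m := m) t u]
  exact (hNL _ hα).trans_eq (by rw [norm_NL_snd_fst]; rfl)

end VectorField

theorem vfield_bound_general (d n : ℕ) (m σ : ℝ) (hm : 0 < m)
    (hσ : σ ∈ Set.Icc (1 / 2 : ℝ) 1)
    (χ : EuclideanSpace ℝ (Fin d) → ℝ)
    (hχ : MemLp (fun k => omega d m k ^ ((3 : ℝ) / 2 - σ) * χ k) 2 volume)
    (V : EuclideanSpace ℝ (Fin n × Fin d) → ℝ)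
    (hV1 : ∃ C, ∀ q, ‖gradient V q‖ ≤ C)
    (M : Fin n → ℝ) (hM : ∀ j, 0 < M j)
    (f : Fin n → EuclideanSpace ℝ (Fin d) → ℝ)
    (hf : (∀ j p, f j p = Real.sqrt (‖p‖ ^ 2 + M j ^ 2)) ∨
          (∀ j p, f j p = ‖p‖ ^ 2 / (2 * M j))) :
    (∃ C > 0, ∀ (t : ℝ) (u : PhaseSpace d n),
        MemLp (fun k => ((omega d m k ^ σ : ℝ) : ℂ) * u.2.2 k) 2 volume →
        normX d n σ m (vfield d n m χ V f t u) ≤ C * ((normX d n 0 m u) ^ 2 + 1)) ∧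
    ((∀ j p, f j p = Real.sqrt (‖p‖ ^ 2 + M j ^ 2)) →
      ∃ C > 0, ∀ (t : ℝ) (u : PhaseSpace d n),
        MemLp (fun k => ((omega d m k ^ σ : ℝ) : ℂ) * u.2.2 k) 2 volume →
        normX d n σ m (vfield d n m χ V f t u) ≤
          C * (((eLpNorm u.2.2 2 volume).toReal) ^ 2 + 1)) := by
  obtain ⟨C, hC, hv⟩ := exists_normX_vfield_le hm (by linarith [hσ.1]) hσ.2 hχ hV1 f
  have hM₀ : ∀ j, M j ≠ 0 := fun j => (hM j).ne'
  refine ⟨?_, fun hrel => ?_⟩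
  · obtain ⟨B, hB, hkin⟩ := exists_sqrt_sum_norm_gradient_sq_le hM₀ hf
    refine ⟨2 * (C + B) + 1, by positivity, fun t u hu => ?_⟩
    have hα := one_add_le_two_mul_sq_add_one (eLpNorm_field_le_normX_zero (m := m) u)
    have hp := one_add_le_two_mul_sq_add_one (sqrt_sum_norm_sq_le_normX (σ := 0) (m := m) u)
    nlinarith [hv t u hu, hkin u.1, mul_le_mul_of_nonneg_left hα hC.le,
      mul_le_mul_of_nonneg_left hp hB, sq_nonneg (normX d n 0 m u)]
  · refine ⟨2 * C + Real.sqrt n, by positivity, fun t u hu => ?_⟩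
    have hα := one_add_le_two_mul_sq_add_one (le_refl (eLpNorm u.2.2 2 volume).toReal)
    nlinarith [hv t u hu, sqrt_sum_norm_gradient_sq_le_of_semirelativistic hM₀ hrel u.1,
      mul_le_mul_of_nonneg_left hα hC.le,
      mul_nonneg (Real.sqrt_nonneg n) (sq_nonneg (eLpNorm u.2.2 2 volume).toReal)]

/-- Quantitative vector field bound: under V ∈ C²_b and ω^{3/2−σ}χ ∈ L², σ ∈ [1/2,1],
there is C > 0 with ‖v(t,u)‖_{X^σ} ≤ C(‖u‖²_{X⁰} + 1) for all t and u ∈ X^σ, where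
v(t,u) = Φ^f_{−t}(𝒩(Φ^f_t(u))). In the semi-relativistic case the sharper bound
‖v(t,u)‖_{X^σ} ≤ C(‖α‖²_{L²} + 1) holds. -/
theorem vfield_bound (d n : ℕ) (m σ : ℝ) (hm : 0 < m)
    (hσ : σ ∈ Set.Icc (1 / 2 : ℝ) 1)
    (χ : EuclideanSpace ℝ (Fin d) → ℝ)
    (hχ : MemLp (fun k => omega d m k ^ ((3 : ℝ) / 2 - σ) * χ k) 2 volume)
    (V : EuclideanSpace ℝ (Fin n × Fin d) → ℝ)
    (hV : ContDiff ℝ 2 V)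
    (hV1 : ∃ C, ∀ q, ‖gradient V q‖ ≤ C)
    (hV2 : ∃ C, ∀ q, ‖fderiv ℝ (fderiv ℝ V) q‖ ≤ C)
    (M : Fin n → ℝ) (hM : ∀ j, 0 < M j)
    (f : Fin n → EuclideanSpace ℝ (Fin d) → ℝ)
    (hf : (∀ j p, f j p = Real.sqrt (‖p‖ ^ 2 + M j ^ 2)) ∨
          (∀ j p, f j p = ‖p‖ ^ 2 / (2 * M j))) :
    (∃ C > 0, ∀ (t : ℝ) (u : PhaseSpace d n),
        MemLp (fun k => ((omega d m k ^ σ : ℝ) : ℂ) * u.2.2 k) 2 volume →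
        normX d n σ m (vfield d n m χ V f t u) ≤ C * ((normX d n 0 m u) ^ 2 + 1)) ∧
    ((∀ j p, f j p = Real.sqrt (‖p‖ ^ 2 + M j ^ 2)) →
      ∃ C > 0, ∀ (t : ℝ) (u : PhaseSpace d n),
        MemLp (fun k => ((omega d m k ^ σ : ℝ) : ℂ) * u.2.2 k) 2 volume →
        normX d n σ m (vfield d n m χ V f t u) ≤
          C * (((eLpNorm u.2.2 2 volume).toReal) ^ 2 + 1)) :=
  vfield_bound_general d n m σ hm hσ χ hχ V hV1 M hM f hf
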